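/- Let α > 1 and αβ² > γ², and set L = {β·(γ²/(αβ²))^k : k = 0,1,2,…}. If r ∈ [0,∞), r > 0, and either r ∉ L, or r ∈ L and b* ∉ L, then the iterates φⁿ(r) tend to +∞. -/

import Mathlib

open Filter

/-- The real map describing how `f(x) = a x ((x+b)/(x+c))²` transforms the p-adic
absolute value `|x|_p` when `α = |a|_p`, `β = |b|_p`, `γ = |c|_p` and `β < γ`. -/
noncomputable def phiMap (α β γ bs cs : ℝ) : ℝ → ℝ := fun r =>
  if r < β then α * β ^ 2 / γ ^ 2 * r
  else if r = β then bs
  else if r < γ then α / γ ^ 2 * r ^ 3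
  else if r = γ then cs
  else α * r

/- With `c = αβ²/γ² > 1`, the map `φ` is multiplication by `c` below `β` and grows at least
by the factor `c` above `β`; moreover `(β, ∞)` is invariant. So an orbit escapes to `∞` as
soon as it jumps over `β`, which an orbit starting below `β` does unless it lands exactly on
`β`, i.e. unless it starts in `L = {β c⁻ᵏ}`. An orbit that does land on `β` continues
from `b*`. -/

theorem Filter.Tendsto.of_iterate_iterate {X : Type*} {l : Filter X} {f : X → X} {x : X}
    (m : ℕ) (h : Tendsto (fun n => f^[n] (f^[m] x)) atTop l) :
    Tendsto (fun n => f^[n] x) atTop l :=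
  (tendsto_add_atTop_iff_nat m).1 <| by simpa only [Function.iterate_add_apply] using h

theorem eq_mul_inv_pow_iff {c β s : ℝ} (hc : c ≠ 0) (k : ℕ) :
    s = β * c⁻¹ ^ k ↔ c ^ k * s = β := by
  rw [inv_pow, ← div_eq_mul_inv, eq_div_iff (pow_ne_zero k hc), mul_comm]

section Escape

variable {f : ℝ → ℝ} {c β s : ℝ} (hc : 1 < c)
  (below : ∀ s < β, f s = c * s) (above : ∀ s, β < s → c * s ≤ f s)

include below in
theorem iterate_eq_pow_mul {n : ℕ} (h : ∀ k < n, c ^ k * s < β) : f^[n] s = c ^ n * s := by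
  induction n with
  | zero => simp
  | succ n ih =>
    rw [Function.iterate_succ_apply', ih fun k hk => h k (hk.trans n.lt_succ_self),
      below _ (h n n.lt_succ_self), pow_succ']
    ring

include hc above in
theorem lt_iterate_and_pow_mul_le_iterate (hβ : 0 ≤ β) (hs : β < s) (n : ℕ) :
    β < f^[n] s ∧ c ^ n * s ≤ f^[n] s := by
  induction n with
  | zero => simpa using hs
  | succ n ih =>
    obtain ⟨hβn, hle⟩ := ih
    have hstep := above _ hβn
    rw [Function.iterate_succ_apply', pow_succ']
    refine ⟨hβn.trans_le ?_, ?_⟩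
    · calc f^[n] s ≤ c * f^[n] s := le_mul_of_one_le_left (hβ.trans hβn.le) hc.le
        _ ≤ f (f^[n] s) := hstep
    · calc c * c ^ n * s = c * (c ^ n * s) := mul_assoc _ _ _
        _ ≤ c * f^[n] s := by gcongr
        _ ≤ f (f^[n] s) := hstep

include hc above in
theorem tendsto_iterate_of_lt (hβ : 0 ≤ β) (hs : β < s) :
    Tendsto (fun n => f^[n] s) atTop atTop :=
  tendsto_atTop_mono (fun n => (lt_iterate_and_pow_mul_le_iterate hc above hβ hs n).2)
    ((tendsto_pow_atTop_atTop_of_one_lt hc).atTop_mul_const (hβ.trans_lt hs))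

include hc below above in
theorem tendsto_iterate_of_not_exists_eq (hβ : 0 < β) (hs : 0 < s)
    (hsL : ¬ ∃ k : ℕ, s = β * c⁻¹ ^ k) : Tendsto (fun n => f^[n] s) atTop atTop := by
  have hc0 : c ≠ 0 := (one_pos.trans hc).ne'
  have hex : ∃ n, β ≤ c ^ n * s :=
    (((tendsto_pow_atTop_atTop_of_one_lt hc).atTop_mul_const hs).eventually_ge_atTop β).exists
  set N := Nat.find hex
  have hN : f^[N] s = c ^ N * s :=
    iterate_eq_pow_mul below fun k hk => not_le.1 (Nat.find_min hex hk)
  have hjump : β < f^[N] s := hN ▸ (Nat.find_spec hex).lt_of_ne fun h =>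
    hsL ⟨N, (eq_mul_inv_pow_iff hc0 N).2 h.symm⟩
  exact .of_iterate_iterate N (tendsto_iterate_of_lt hc above hβ.le hjump)

include hc below in
theorem iterate_eq_of_eq_mul_inv_pow (hs : 0 < s) {k : ℕ} (hk : s = β * c⁻¹ ^ k) :
    f^[k] s = β := by
  rw [eq_mul_inv_pow_iff (one_pos.trans hc).ne'] at hk
  rw [iterate_eq_pow_mul below fun j hj => hk ▸ by gcongr, hk]

end Escape

theorem phiMap_of_lt {α β γ bs cs s : ℝ} (hs : s < β) :
    phiMap α β γ bs cs s = α * β ^ 2 / γ ^ 2 * s := if_pos hs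

theorem phiMap_self (α β γ bs cs : ℝ) : phiMap α β γ bs cs β = bs := by
  simp [phiMap]

theorem mul_le_phiMap {α β γ bs cs s : ℝ} (hα : 0 ≤ α) (hβ : 0 ≤ β) (hβγ : β < γ)
    (hcs : α * γ ≤ cs) (hs : β < s) : α * β ^ 2 / γ ^ 2 * s ≤ phiMap α β γ bs cs s := by
  have hγ : 0 < γ := hβ.trans_lt hβγ
  have hs0 : 0 < s := hβ.trans_lt hs
  have hcα : α * β ^ 2 / γ ^ 2 ≤ α := by
    rw [div_le_iff₀ (by positivity)]
    exact mul_le_mul_of_nonneg_left (pow_le_pow_left₀ hβ hβγ.le 2) hα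
  unfold phiMap
  rw [if_neg hs.not_gt, if_neg hs.ne']
  split_ifs with hsγ hsγ'
  · calc α * β ^ 2 / γ ^ 2 * s = α / γ ^ 2 * (β ^ 2 * s) := by ring
      _ ≤ α / γ ^ 2 * (s ^ 2 * s) := by gcongr
      _ = α / γ ^ 2 * s ^ 3 := by ring
  · subst hsγ'
    exact (mul_le_mul_of_nonneg_right hcα hs0.le).trans hcs
  · exact mul_le_mul_of_nonneg_right hcα hs0.le

theorem phi_tendsto_atTop_of_alpha_gt_one_gt_general
    (α β γ bs cs : ℝ) (hα : 0 < α) (hβ : 0 < β) (hγ : 0 < γ)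
    (hbs : 0 < bs) (hβγ : β < γ)
    (hcsge : α * γ ≤ cs)
    (hgt : γ ^ 2 < α * β ^ 2) (r : ℝ) (hr : 0 < r)
    (hrL : (¬ ∃ k : ℕ, r = β * (γ ^ 2 / (α * β ^ 2)) ^ k) ∨
      ((∃ k : ℕ, r = β * (γ ^ 2 / (α * β ^ 2)) ^ k) ∧
        ¬ ∃ k : ℕ, bs = β * (γ ^ 2 / (α * β ^ 2)) ^ k)) :
    Tendsto (fun n => (phiMap α β γ bs cs)^[n] r) atTop atTop := by
  rw [← inv_div (α * β ^ 2) (γ ^ 2)] at hrL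
  have hc : 1 < α * β ^ 2 / γ ^ 2 := (one_lt_div (by positivity)).2 hgt
  have below (s : ℝ) (hs : s < β) := phiMap_of_lt (α := α) (γ := γ) (bs := bs) (cs := cs) hs
  have above (s : ℝ) (hs : β < s) := mul_le_phiMap (bs := bs) hα.le hβ.le hβγ hcsge hs
  rcases hrL with hrL | ⟨⟨k, hk⟩, hbsL⟩
  · exact tendsto_iterate_of_not_exists_eq hc below above hβ hr hrL
  · refine .of_iterate_iterate (k + 1) ?_
    rw [Function.iterate_succ_apply', iterate_eq_of_eq_mul_inv_pow hc below hr hk, phiMap_self]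
    exact tendsto_iterate_of_not_exists_eq hc below above hβ hbs hbsL

theorem phi_tendsto_atTop_of_alpha_gt_one_gt
    (α β γ bs cs : ℝ) (hα : 0 < α) (hβ : 0 < β) (hγ : 0 < γ)
    (hbs : 0 < bs) (hcs : 0 < cs) (hβγ : β < γ)
    (hbsle : bs ≤ α * β ^ 3 / γ ^ 2) (hcsge : α * γ ≤ cs)
    (hα1 : 1 < α) (hgt : γ ^ 2 < α * β ^ 2) (r : ℝ) (hr : 0 < r)
    (hrL : (¬ ∃ k : ℕ, r = β * (γ ^ 2 / (α * β ^ 2)) ^ k) ∨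
      ((∃ k : ℕ, r = β * (γ ^ 2 / (α * β ^ 2)) ^ k) ∧
        ¬ ∃ k : ℕ, bs = β * (γ ^ 2 / (α * β ^ 2)) ^ k)) :
    Tendsto (fun n => (phiMap α β γ bs cs)^[n] r) atTop atTop :=
  phi_tendsto_atTop_of_alpha_gt_one_gt_general α β γ bs cs hα hβ hγ hbs hβγ hcsge hgt r hr hrL
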